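/- arXiv:1607.05426 — 5 statements merged into one kernel-verified Lean document; each statement's English description precedes it below -/
import Mathlib

section
/- Let S ⊆ ℝ^{m×n} be a linear subspace that is quadratically invariant under P ∈ ℝ^{n×m} (i.e., K·P·K ∈ S for all K ∈ S). Then for every K ∈ S and every natural number k, the matrix K·(P·K)^k belongs to S. -/
theorem qi_pow_mem {m n : ℕ} (S : Submodule ℝ (Matrix (Fin m) (Fin n) ℝ))
    (P : Matrix (Fin n) (Fin m) ℝ)
    (hQI : ∀ K ∈ S, K * P * K ∈ S) :
    ∀ K ∈ S, ∀ k : ℕ, K * (P * K) ^ k ∈ S := by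
  have hpol : ∀ K ∈ S, ∀ L ∈ S, K * P * L + L * P * K ∈ S := by
    intro K hK L hL
    have h1 := hQI (K + L) (S.add_mem hK hL)
    have h2 := hQI K hK
    have h3 := hQI L hL
    have : K * P * L + L * P * K = (K + L) * P * (K + L) - K * P * K - L * P * L := by
      simp only [Matrix.add_mul, Matrix.mul_add]
      abel
    rw [this]
    exact S.sub_mem (S.sub_mem h1 h2) h3
  intro K hK k
  induction k with
  | zero => simpa using hK
  | succ k ih =>
      have h := hpol K hK (K * (P * K) ^ k) ih
      have e1 : K * P * (K * (P * K) ^ k) = K * (P * K) ^ (k + 1) := by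
        rw [pow_succ']
        simp only [Matrix.mul_assoc]
      have e2 : K * (P * K) ^ k * P * K = K * (P * K) ^ (k + 1) := by
        rw [pow_succ]
        simp only [Matrix.mul_assoc]
      have heq : K * P * (K * (P * K) ^ k) + K * (P * K) ^ k * P * K
          = (2 : ℝ) • (K * (P * K) ^ (k + 1)) := by
        rw [e1, e2, two_smul]
      rw [heq] at h
      have := S.smul_mem (2 : ℝ)⁻¹ h
      rwa [smul_smul, inv_mul_cancel₀ (by norm_num), one_smul] at this
end

section
/- Let S ⊆ ℝ^{m×n} be a linear subspace quadratically invariant under P ∈ ℝ^{n×m}. If P·K is nilpotent for K ∈ S (so that I - P·K is invertible with inverse the finite Neumann series), then K·(I - P·K)⁻¹ ∈ S. -/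
theorem qi_feedback_mem {m n : ℕ} (S : Submodule ℝ (Matrix (Fin m) (Fin n) ℝ))
    (P : Matrix (Fin n) (Fin m) ℝ)
    (hQI : ∀ K ∈ S, K * P * K ∈ S)
    (K : Matrix (Fin m) (Fin n) ℝ) (hK : K ∈ S)
    (hnil : IsNilpotent (P * K)) :
    K * (1 - P * K)⁻¹ ∈ S := by
  obtain ⟨r, hr⟩ := hnil
  -- polarization: K P L + L P K ∈ S for K, L ∈ S
  have hpol : ∀ L ∈ S, K * P * L + L * P * K ∈ S := by
    intro L hL
    have h1 := hQI (K + L) (S.add_mem hK hL)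
    have h2 := hQI K hK
    have h3 := hQI L hL
    have := S.sub_mem (S.sub_mem h1 h2) h3
    convert this using 1
    simp only [Matrix.add_mul, Matrix.mul_add]
    abel
  -- K * (P*K)^i ∈ S for all i
  have hpow : ∀ i : ℕ, K * (P * K) ^ i ∈ S := by
    intro i
    induction i with
    | zero => simpa using hK
    | succ i ih =>
      have h := hpol (K * (P * K) ^ i) ih
      have heq : K * P * (K * (P * K) ^ i) + K * (P * K) ^ i * P * K
          = (2 : ℝ) • (K * (P * K) ^ (i + 1)) := by
        rw [two_smul]
        congr 1
        · rw [pow_succ']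
          simp only [Matrix.mul_assoc]
        · rw [pow_succ]
          simp only [Matrix.mul_assoc]
      rw [heq] at h
      have := S.smul_mem (2⁻¹ : ℝ) h
      rwa [smul_smul, inv_mul_cancel₀ (by norm_num), one_smul] at this
  -- Neumann series inverse
  have hinv : (1 - P * K)⁻¹ = ∑ i ∈ Finset.range r, (P * K) ^ i := by
    apply Matrix.inv_eq_right_inv
    rw [mul_neg_geom_sum, hr, sub_zero]
  rw [hinv, Matrix.mul_sum]
  exact S.sum_mem fun i _ => hpow i
end

section
/- Let S₁ ⊆ ℝ^{m₁×n}, S₂ ⊆ ℝ^{m₂×n} be linear subspaces and P₁₂ ∈ ℝ^{n×m₁}, P₁₃ ∈ ℝ^{n×m₂}. Define S = S₁ × S₂ viewed as block matrices [K₁; K₂] ∈ ℝ^{(m₁+m₂)×n} and P = [P₁₂ P₁₃] ∈ ℝ^{n×(m₁+m₂)}. Then S is quadratically invariant under P if and only if for all (K₁,K₂) ∈ S₁ × S₂: K₁P₁₂K₁ ∈ S₁, K₁P₁₃K₂ ∈ S₁, K₂P₁₂K₁ ∈ S₂, and K₂P₁₃K₂ ∈ S₂. -/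
/-!
Multiplying out the blocks, the two block rows of `[K₁; K₂] [P₁₂ P₁₃] [K₁; K₂]` are
`K₁P₁₂K₁ + K₁P₁₃K₂` and `K₂P₁₂K₁ + K₂P₁₃K₂`. Sums of the four terms lie in the subspaces when
the terms do. Conversely, taking `K₂ = 0` (resp. `K₁ = 0`) isolates `K₁P₁₂K₁` (resp. `K₂P₁₃K₂`),
and subtracting these from the full block rows leaves the two cross terms.
-/

open Matrix

section BlockProduct

variable {R m₁ m₂ n : Type*} [Fintype m₁] [Fintype m₂] [Fintype n] [Semiring R]
  (K₁ : Matrix m₁ n R) (K₂ : Matrix m₂ n R) (P₁ : Matrix n m₁ R) (P₂ : Matrix n m₂ R)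

theorem toRows₁_fromRows_mul_fromCols_mul_fromRows :
    (fromRows K₁ K₂ * fromCols P₁ P₂ * fromRows K₁ K₂).toRows₁ = K₁ * P₁ * K₁ + K₁ * P₂ * K₂ := by
  rw [Matrix.mul_assoc, fromRows_mul, toRows₁_fromRows, fromCols_mul_fromRows, Matrix.mul_add,
    Matrix.mul_assoc, Matrix.mul_assoc]

theorem toRows₂_fromRows_mul_fromCols_mul_fromRows :
    (fromRows K₁ K₂ * fromCols P₁ P₂ * fromRows K₁ K₂).toRows₂ = K₂ * P₁ * K₁ + K₂ * P₂ * K₂ := by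
  rw [Matrix.mul_assoc, fromRows_mul, toRows₂_fromRows, fromCols_mul_fromRows, Matrix.mul_add,
    Matrix.mul_assoc, Matrix.mul_assoc]

end BlockProduct

theorem mutual_quadratic_invariance_iff {m₁ m₂ n : ℕ}
    (S₁ : Submodule ℝ (Matrix (Fin m₁) (Fin n) ℝ))
    (S₂ : Submodule ℝ (Matrix (Fin m₂) (Fin n) ℝ))
    (P₁₂ : Matrix (Fin n) (Fin m₁) ℝ) (P₁₃ : Matrix (Fin n) (Fin m₂) ℝ) :
    (∀ K₁ ∈ S₁, ∀ K₂ ∈ S₂,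
        (Matrix.fromRows K₁ K₂ * Matrix.fromCols P₁₂ P₁₃ *
          Matrix.fromRows K₁ K₂).toRows₁ ∈ S₁ ∧
        (Matrix.fromRows K₁ K₂ * Matrix.fromCols P₁₂ P₁₃ *
          Matrix.fromRows K₁ K₂).toRows₂ ∈ S₂) ↔
    (∀ K₁ ∈ S₁, ∀ K₂ ∈ S₂,
        K₁ * P₁₂ * K₁ ∈ S₁ ∧ K₁ * P₁₃ * K₂ ∈ S₁ ∧
        K₂ * P₁₂ * K₁ ∈ S₂ ∧ K₂ * P₁₃ * K₂ ∈ S₂) := by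
  simp only [toRows₁_fromRows_mul_fromCols_mul_fromRows,
    toRows₂_fromRows_mul_fromCols_mul_fromRows]
  constructor
  · intro h K₁ hK₁ K₂ hK₂
    have h₁₁ : K₁ * P₁₂ * K₁ ∈ S₁ := by simpa using (h K₁ hK₁ 0 S₂.zero_mem).1
    have h₂₂ : K₂ * P₁₃ * K₂ ∈ S₂ := by simpa using (h 0 S₁.zero_mem K₂ hK₂).2
    obtain ⟨h₁, h₂⟩ := h K₁ hK₁ K₂ hK₂
    exact ⟨h₁₁, (add_mem_cancel_left h₁₁).1 h₁, (add_mem_cancel_right h₂₂).1 h₂, h₂₂⟩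
  · intro h K₁ hK₁ K₂ hK₂
    obtain ⟨h₁₁, h₁₂, h₂₁, h₂₂⟩ := h K₁ hK₁ K₂ hK₂
    exact ⟨S₁.add_mem h₁₁ h₁₂, S₂.add_mem h₂₁ h₂₂⟩
end

section
/- Nonexistence of transfer for nonzero-sum games (counterexample verification): in the two-stage scalar game with A = 2, B₁ = 0.4, B₂ = 0.1, and costs J₁ with weights M₁ = R₁ = S₁ = 1 and J₂ with M₂ = 70, R₂ = S₂ = 1, there exist feedback strategies K̄₁, K̄₂ equivalent (via the feedforward↔feedback bijection) to the unique feedforward Nash equilibrium, together with a deviation K̂₁ of K̄₁ (with the same lower-triangular structure) such that J₁ evaluated at (K̂₁, K̄₂) is strictly smaller than J₁ at (K̄₁, K̄₂); hence (K̄₁, K̄₂) is not a Nash equilibrium in feedback strategies. -/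
open Matrix

/-- `Z𝒜` for the scalar system `x⁺ = 2x + 0.4u + 0.1v + w` over horizon `N = 2`. -/
noncomputable def ceZA : Matrix (Fin 3) (Fin 3) ℝ := !![0,0,0; 2,0,0; 0,2,0]

noncomputable def ceZB1 : Matrix (Fin 3) (Fin 2) ℝ := !![0,0; 0.4,0; 0,0.4]

noncomputable def ceZB2 : Matrix (Fin 3) (Fin 2) ℝ := !![0,0; 0.1,0; 0,0.1]

noncomputable def ceP11 : Matrix (Fin 3) (Fin 3) ℝ := (1 - ceZA)⁻¹

noncomputable def ceP12 : Matrix (Fin 3) (Fin 2) ℝ := ceP11 * ceZB1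

noncomputable def ceP13 : Matrix (Fin 3) (Fin 2) ℝ := ceP11 * ceZB2

/-- State weights for player 1 (`M₁(0) = 0`, `M₁(1) = M₁(2) = 1`). -/
noncomputable def ceM1 : Matrix (Fin 3) (Fin 3) ℝ := Matrix.diagonal ![0, 1, 1]

/-- State weights for player 2 (`M₂(0) = 0`, `M₂(1) = M₂(2) = 70`). -/
noncomputable def ceM2 : Matrix (Fin 3) (Fin 3) ℝ := Matrix.diagonal ![0, 70, 70]

/-- Cost of player with state weight `M` (input weights `R = S = 1`, `Σ_w = I`),
for disturbance feedforward strategies `u = Q₁ P₁₁ w`, `v = Q₂ P₁₁ w`. -/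
noncomputable def ceCost (M : Matrix (Fin 3) (Fin 3) ℝ)
    (Q₁ Q₂ : Matrix (Fin 2) (Fin 3) ℝ) : ℝ :=
  (((1 + ceP12 * Q₁ + ceP13 * Q₂) * ceP11)ᵀ * M *
      ((1 + ceP12 * Q₁ + ceP13 * Q₂) * ceP11)).trace +
    (Q₁ᵀ * Q₁).trace + (Q₂ᵀ * Q₂).trace

/-- Causal (lower-triangular) structure: input at time `t` depends only on states
up to time `t`. -/
def ceLT : Set (Matrix (Fin 2) (Fin 3) ℝ) :=
  {K | ∀ (i : Fin 2) (j : Fin 3), (i : ℕ) < (j : ℕ) → K i j = 0}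

/-- Nash equilibrium in (causal, linear) feedforward strategies. -/
noncomputable def ceNashFF (Q₁ Q₂ : Matrix (Fin 2) (Fin 3) ℝ) : Prop :=
  Q₁ ∈ ceLT ∧ Q₂ ∈ ceLT ∧
    (∀ Q₁' ∈ ceLT, ceCost ceM1 Q₁ Q₂ ≤ ceCost ceM1 Q₁' Q₂) ∧
    (∀ Q₂' ∈ ceLT, ceCost ceM2 Q₁ Q₂ ≤ ceCost ceM2 Q₁ Q₂')

/-- The feedforward-to-feedback map `g`:  `Kᵢ = Qᵢ (I + P₁₂Q₁ + P₁₃Q₂)⁻¹`. -/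
noncomputable def ceG (Q₁ Q₂ : Matrix (Fin 2) (Fin 3) ℝ) :
    Matrix (Fin 2) (Fin 3) ℝ × Matrix (Fin 2) (Fin 3) ℝ :=
  (Q₁ * (1 + ceP12 * Q₁ + ceP13 * Q₂)⁻¹, Q₂ * (1 + ceP12 * Q₁ + ceP13 * Q₂)⁻¹)

/-- Cost in feedback strategies, evaluated through the equivalent feedforward
strategies `Qᵢ = Kᵢ (I - P₁₂K₁ - P₁₃K₂)⁻¹`. -/
noncomputable def ceCostFB (M : Matrix (Fin 3) (Fin 3) ℝ)
    (K₁ K₂ : Matrix (Fin 2) (Fin 3) ℝ) : ℝ :=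
  ceCost M (K₁ * (1 - ceP12 * K₁ - ceP13 * K₂)⁻¹)
    (K₂ * (1 - ceP12 * K₁ - ceP13 * K₂)⁻¹)

/-- Nash equilibrium in (causal, linear) state feedback strategies. -/
noncomputable def ceNashFB (K₁ K₂ : Matrix (Fin 2) (Fin 3) ℝ) : Prop :=
  K₁ ∈ ceLT ∧ K₂ ∈ ceLT ∧
    (∀ K₁' ∈ ceLT, ceCostFB ceM1 K₁ K₂ ≤ ceCostFB ceM1 K₁' K₂) ∧
    (∀ K₂' ∈ ceLT, ceCostFB ceM2 K₁ K₂ ≤ ceCostFB ceM2 K₁ K₂')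



lemma hP11 : ceP11 = !![1,0,0;2,1,0;4,2,1] := by
  rw [ceP11, Matrix.inv_eq_right_inv]
  ext i j
  fin_cases i <;> fin_cases j <;>
    norm_num [ceZA, Matrix.mul_apply, Fin.sum_univ_succ, Matrix.one_fin_three, Matrix.sub_apply]

lemma hP12 : ceP12 = !![0,0;(2:ℝ)/5,0;4/5,2/5] := by
  rw [ceP12, hP11]
  ext i j
  fin_cases i <;> fin_cases j <;>
    norm_num [ceZB1, Matrix.mul_apply, Fin.sum_univ_succ]

lemma hP13 : ceP13 = !![0,0;(1:ℝ)/10,0;1/5,1/10] := by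
  rw [ceP13, hP11]
  ext i j
  fin_cases i <;> fin_cases j <;>
    norm_num [ceZB2, Matrix.mul_apply, Fin.sum_univ_succ]

lemma cost_eval (m1 m2 a b c d e f : ℝ) :
    ceCost (Matrix.diagonal ![0, m1, m2]) !![a,0,0;b,c,0] !![d,0,0;e,f,0] =
      4/25*a^2*m1 + 16/25*a^2*m2 + a^2 + 16/25*a*b*m2 + 32/25*a*c*m2 + 2/25*a*d*m1
      + 8/25*a*d*m2 + 4/25*a*e*m2 + 8/25*a*f*m2 + 8/5*a*m1 + 32/5*a*m2 + 4/25*b^2*m2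
      + b^2 + 16/25*b*c*m2 + 4/25*b*d*m2 + 2/25*b*e*m2 + 4/25*b*f*m2 + 16/5*b*m2
      + 4/5*c^2*m2 + c^2 + 8/25*c*d*m2 + 4/25*c*e*m2 + 2/5*c*f*m2 + 8*c*m2
      + 1/100*d^2*m1 + 1/25*d^2*m2 + d^2 + 1/25*d*e*m2 + 2/25*d*f*m2 + 2/5*d*m1
      + 8/5*d*m2 + 1/100*e^2*m2 + e^2 + 1/25*e*f*m2 + 4/5*e*m2 + 1/20*f^2*m2 + f^2
      + 2*f*m2 + 5*m1 + 21*m2 := by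
  rw [ceCost, hP11, hP12, hP13]
  simp only [Matrix.trace, Matrix.diag, Matrix.mul_apply, Matrix.transpose_apply,
    Fin.sum_univ_succ, Finset.sum_empty, Fin.sum_univ_zero, Matrix.one_fin_three,
    Matrix.add_apply, Matrix.diagonal, Matrix.of_apply, Matrix.cons_val', Matrix.cons_val_zero,
    Matrix.cons_val_one, Matrix.head_cons, Matrix.empty_val', Matrix.cons_val_fin_one,
    Matrix.head_fin_const, Matrix.cons_val_succ]
  norm_num [Fin.ext_iff]
  ring

lemma mem_lt (a b c : ℝ) : !![a,0,0;b,c,0] ∈ ceLT := by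
  intro i j hij
  fin_cases i <;> fin_cases j <;> simp_all

lemma lt_repr {Q : Matrix (Fin 2) (Fin 3) ℝ} (h : Q ∈ ceLT) :
    Q = !![Q 0 0, 0, 0; Q 1 0, Q 1 1, 0] := by
  ext i j
  fin_cases i <;> fin_cases j <;>
    simp [h 0 1 (by norm_num), h 0 2 (by norm_num), h 1 2 (by norm_num)]

lemma key {α β : ℝ} (hα : 0 < α) (h : ∀ t : ℝ, 0 ≤ α * t ^ 2 + β * t) : β = 0 := by
  have h1 := h (-(β / (2 * α)))
  have h2 : α * (-(β / (2 * α))) ^ 2 + β * (-(β / (2 * α))) = -(β ^ 2 / (4 * α)) := by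
    field_simp; ring
  rw [h2] at h1
  have h3 : β ^ 2 / (4 * α) ≤ 0 := by linarith
  have h4 : β ^ 2 ≤ 0 := by
    have := (div_le_iff₀ (by positivity : (0:ℝ) < 4 * α)).mp h3
    simpa using this
  have h5 : β ^ 2 = 0 := le_antisymm h4 (sq_nonneg β)
  exact (pow_eq_zero_iff two_ne_zero).mp h5

lemma hM1 : ceM1 = Matrix.diagonal ![0, 1, 1] := rfl
lemma hM2 : ceM2 = Matrix.diagonal ![0, 70, 70] := rfl

set_option maxHeartbeats 1000000 in
lemma nash1 : ∀ Q₁' ∈ ceLT,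
    ceCost ceM1 !![-11720/25849,0,0; -560/25849,-11720/25849,0]
        !![-205100/25849,0,0; -9800/25849,-205100/25849,0] ≤
      ceCost ceM1 Q₁' !![-205100/25849,0,0; -9800/25849,-205100/25849,0] := by
  intro Q₁' h'
  rw [lt_repr h', hM1, cost_eval, cost_eval]
  set a := Q₁' 0 0; set b := Q₁' 1 0; set c := Q₁' 1 1
  nlinarith [sq_nonneg (a + 11720/25849 + 8/45*(b + 560/25849) + 16/45*(c + 11720/25849)),
    sq_nonneg (b + 560/25849 + 232/1241*(c + 11720/25849)),
    sq_nonneg (c + 11720/25849)]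

set_option maxHeartbeats 1000000 in
lemma nash2 : ∀ Q₂' ∈ ceLT,
    ceCost ceM2 !![-11720/25849,0,0; -560/25849,-11720/25849,0]
        !![-205100/25849,0,0; -9800/25849,-205100/25849,0] ≤
      ceCost ceM2 !![-11720/25849,0,0; -560/25849,-11720/25849,0] Q₂' := by
  intro Q₂' h'
  rw [lt_repr h', hM2, cost_eval, cost_eval]
  set d := Q₂' 0 0; set e := Q₂' 1 0; set f := Q₂' 1 1
  nlinarith [sq_nonneg (d + 205100/25849 + 14/45*(e + 9800/25849) + 28/45*(f + 205100/25849)),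
    sq_nonneg (e + 9800/25849 + 238/569*(f + 205100/25849)),
    sq_nonneg (f + 205100/25849)]

set_option maxHeartbeats 1000000 in
lemma grad1 {Q₂ : Matrix (Fin 2) (Fin 3) ℝ} (h2 : Q₂ ∈ ceLT) (a b c : ℝ)
    (hopt1 : ∀ Q₁' ∈ ceLT, ceCost ceM1 !![a,0,0;b,c,0] Q₂ ≤ ceCost ceM1 Q₁' Q₂) :
    18/5*a + 16/25*b + 32/25*c + 2/5*(Q₂ 0 0) + 4/25*(Q₂ 1 0) + 8/25*(Q₂ 1 1) + 8 = 0 ∧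
    16/25*a + 58/25*b + 16/25*c + 4/25*(Q₂ 0 0) + 2/25*(Q₂ 1 0) + 4/25*(Q₂ 1 1) + 16/5 = 0 ∧
    32/25*a + 16/25*b + 18/5*c + 8/25*(Q₂ 0 0) + 4/25*(Q₂ 1 0) + 2/5*(Q₂ 1 1) + 8 = 0 := by
  rw [lt_repr h2] at hopt1
  set d := Q₂ 0 0; set e := Q₂ 1 0; set f := Q₂ 1 1
  refine ⟨?_, ?_, ?_⟩
  · refine key (by norm_num : (0:ℝ) < 9/5) fun t => ?_
    have h := hopt1 !![a + t,0,0;b,c,0] (mem_lt _ _ _)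
    rw [hM1, cost_eval, cost_eval] at h
    linarith [h]
  · refine key (by norm_num : (0:ℝ) < 29/25) fun t => ?_
    have h := hopt1 !![a,0,0;b + t,c,0] (mem_lt _ _ _)
    rw [hM1, cost_eval, cost_eval] at h
    linarith [h]
  · refine key (by norm_num : (0:ℝ) < 9/5) fun t => ?_
    have h := hopt1 !![a,0,0;b,c + t,0] (mem_lt _ _ _)
    rw [hM1, cost_eval, cost_eval] at h
    linarith [h]

set_option maxHeartbeats 1000000 in
lemma grad2 {Q₁ : Matrix (Fin 2) (Fin 3) ℝ} (h1 : Q₁ ∈ ceLT) (d e f : ℝ)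
    (hopt2 : ∀ Q₂' ∈ ceLT, ceCost ceM2 Q₁ !![d,0,0;e,f,0] ≤ ceCost ceM2 Q₁ Q₂') :
    28*(Q₁ 0 0) + 56/5*(Q₁ 1 0) + 112/5*(Q₁ 1 1) + 9*d + 14/5*e + 28/5*f + 140 = 0 ∧
    56/5*(Q₁ 0 0) + 28/5*(Q₁ 1 0) + 56/5*(Q₁ 1 1) + 14/5*d + 17/5*e + 14/5*f + 56 = 0 ∧
    112/5*(Q₁ 0 0) + 56/5*(Q₁ 1 0) + 28*(Q₁ 1 1) + 28/5*d + 14/5*e + 9*f + 140 = 0 := by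
  rw [lt_repr h1] at hopt2
  set a := Q₁ 0 0; set b := Q₁ 1 0; set c := Q₁ 1 1
  refine ⟨?_, ?_, ?_⟩
  · refine key (by norm_num : (0:ℝ) < 9/2) fun t => ?_
    have h := hopt2 !![d + t,0,0;e,f,0] (mem_lt _ _ _)
    rw [hM2, cost_eval, cost_eval] at h
    linarith [h]
  · refine key (by norm_num : (0:ℝ) < 17/10) fun t => ?_
    have h := hopt2 !![d,0,0;e + t,f,0] (mem_lt _ _ _)
    rw [hM2, cost_eval, cost_eval] at h
    linarith [h]
  · refine key (by norm_num : (0:ℝ) < 9/2) fun t => ?_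
    have h := hopt2 !![d,0,0;e,f + t,0] (mem_lt _ _ _)
    rw [hM2, cost_eval, cost_eval] at h
    linarith [h]

set_option maxHeartbeats 1000000 in
lemma nash_unique (Q₁ Q₂ : Matrix (Fin 2) (Fin 3) ℝ) (h : ceNashFF Q₁ Q₂) :
    Q₁ = !![-11720/25849,0,0; -560/25849,-11720/25849,0] ∧
    Q₂ = !![-205100/25849,0,0; -9800/25849,-205100/25849,0] := by
  obtain ⟨h1, h2, hopt1, hopt2⟩ := h
  have hopt1' := hopt1
  rw [lt_repr h1] at hopt1
  obtain ⟨e1, e2, e3⟩ := grad1 h2 (Q₁ 0 0) (Q₁ 1 0) (Q₁ 1 1) hopt1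
  have hopt2' := hopt2
  rw [lt_repr h2] at hopt2
  obtain ⟨e4, e5, e6⟩ := grad2 h1 (Q₂ 0 0) (Q₂ 1 0) (Q₂ 1 1) hopt2
  set a := Q₁ 0 0; set b := Q₁ 1 0; set c := Q₁ 1 1
  set d := Q₂ 0 0; set e := Q₂ 1 0; set f := Q₂ 1 1
  have ha : a = -11720/25849 := by linarith only [e1,e2,e3,e4,e5,e6]
  have hb : b = -560/25849 := by linarith only [e1,e2,e3,e4,e5,e6]
  have hc : c = -11720/25849 := by linarith only [e1,e2,e3,e4,e5,e6]
  have hd : d = -205100/25849 := by linarith only [e1,e2,e3,e4,e5,e6]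
  have he : e = -9800/25849 := by linarith only [e1,e2,e3,e4,e5,e6]
  have hf : f = -205100/25849 := by linarith only [e1,e2,e3,e4,e5,e6]
  constructor
  · rw [lt_repr h1, show Q₁ 0 0 = a from rfl, show Q₁ 1 0 = b from rfl,
      show Q₁ 1 1 = c from rfl, ha, hb, hc]
  · rw [lt_repr h2, show Q₂ 0 0 = d from rfl, show Q₂ 1 0 = e from rfl,
      show Q₂ 1 1 = f from rfl, hd, he, hf]
section FB

local notation "M23" => Matrix (Fin 2) (Fin 3) ℝ
local notation "M33" => Matrix (Fin 3) (Fin 3) ℝ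

set_option maxHeartbeats 1000000 in
lemma hT : (1 : M33) +
    ceP12 * (!![-11720/25849,0,0; -560/25849,-11720/25849,0] : M23) +
    ceP13 * (!![-205100/25849,0,0; -9800/25849,-205100/25849,0] : M23) =
    (!![1,0,0; -25198/25849,1,0; -51600/25849,-25198/25849,1] : M33) := by
  rw [hP12, hP13]
  ext i j
  fin_cases i <;> fin_cases j <;>
    norm_num [Matrix.mul_apply, Fin.sum_univ_succ, Matrix.one_fin_three, Matrix.add_apply]

set_option maxHeartbeats 1000000 in
lemma hTi : (!![1,0,0; -25198/25849,1,0; -51600/25849,-25198/25849,1] : M33)⁻¹ =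
    (!![1,0,0; 25198/25849,1,0; 1968747604/668170801,25198/25849,1] : M33) := by
  rw [Matrix.inv_eq_right_inv]
  ext i j
  fin_cases i <;> fin_cases j <;>
    norm_num [Matrix.mul_apply, Fin.sum_univ_succ, Matrix.one_fin_three]

set_option maxHeartbeats 1000000 in
lemma hG1 : (!![-11720/25849,0,0; -560/25849,-11720/25849,0] : M23) *
    (!![1,0,0; 25198/25849,1,0; 1968747604/668170801,25198/25849,1] : M33) =
    (!![-11720/25849,0,0; -309796000/668170801,-11720/25849,0] : M23) := by
  ext i j
  fin_cases i <;> fin_cases j <;>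
    norm_num [Matrix.mul_apply, Fin.sum_univ_succ]

set_option maxHeartbeats 1000000 in
lemma hG2 : (!![-205100/25849,0,0; -9800/25849,-205100/25849,0] : M23) *
    (!![1,0,0; 25198/25849,1,0; 1968747604/668170801,25198/25849,1] : M33) =
    (!![-205100/25849,0,0; -5421430000/668170801,-205100/25849,0] : M23) := by
  ext i j
  fin_cases i <;> fin_cases j <;>
    norm_num [Matrix.mul_apply, Fin.sum_univ_succ]

set_option maxHeartbeats 1000000 in
lemma hGpair : ceG (!![-11720/25849,0,0; -560/25849,-11720/25849,0] : M23)
    (!![-205100/25849,0,0; -9800/25849,-205100/25849,0] : M23) =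
    ((!![-11720/25849,0,0; -309796000/668170801,-11720/25849,0] : M23),
     (!![-205100/25849,0,0; -5421430000/668170801,-205100/25849,0] : M23)) := by
  rw [ceG, hT, hTi, hG1, hG2]

set_option maxHeartbeats 1000000 in
lemma hL0 : (1 : M33) -
    ceP12 * (!![-11720/25849,0,0; -309796000/668170801,-11720/25849,0] : M23) -
    ceP13 * (!![-205100/25849,0,0; -5421430000/668170801,-205100/25849,0] : M23) =
    (!![1,0,0; 25198/25849,1,0; 1968747604/668170801,25198/25849,1] : M33) := by
  rw [hP12, hP13]
  ext i j
  fin_cases i <;> fin_cases j <;>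
    norm_num [Matrix.mul_apply, Fin.sum_univ_succ, Matrix.one_fin_three, Matrix.sub_apply]

set_option maxHeartbeats 1000000 in
lemma hL0i : (!![1,0,0; 25198/25849,1,0; 1968747604/668170801,25198/25849,1] : M33)⁻¹ =
    (!![1,0,0; -25198/25849,1,0; -51600/25849,-25198/25849,1] : M33) := by
  rw [Matrix.inv_eq_right_inv]
  ext i j
  fin_cases i <;> fin_cases j <;>
    norm_num [Matrix.mul_apply, Fin.sum_univ_succ, Matrix.one_fin_three]

set_option maxHeartbeats 1000000 in
lemma hK1T : (!![-11720/25849,0,0; -309796000/668170801,-11720/25849,0] : M23) *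
    (!![1,0,0; -25198/25849,1,0; -51600/25849,-25198/25849,1] : M33) =
    (!![-11720/25849,0,0; -560/25849,-11720/25849,0] : M23) := by
  ext i j
  fin_cases i <;> fin_cases j <;>
    norm_num [Matrix.mul_apply, Fin.sum_univ_succ]

set_option maxHeartbeats 1000000 in
lemma hK2T : (!![-205100/25849,0,0; -5421430000/668170801,-205100/25849,0] : M23) *
    (!![1,0,0; -25198/25849,1,0; -51600/25849,-25198/25849,1] : M33) =
    (!![-205100/25849,0,0; -9800/25849,-205100/25849,0] : M23) := by
  ext i j
  fin_cases i <;> fin_cases j <;>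
    norm_num [Matrix.mul_apply, Fin.sum_univ_succ]

set_option maxHeartbeats 1000000 in
lemma hcostFBbar :
    ceCostFB ceM1 (!![-11720/25849,0,0; -309796000/668170801,-11720/25849,0] : M23)
      (!![-205100/25849,0,0; -5421430000/668170801,-205100/25849,0] : M23) =
    87245892002/668170801 := by
  rw [ceCostFB, hL0, hL0i, hK1T, hK2T, hM1, cost_eval]
  norm_num

set_option maxHeartbeats 1000000 in
lemma hLc : (1 : M33) -
    ceP12 * (!![-14/25,0,0; -9/20,-43/100,0] : M23) -
    ceP13 * (!![-205100/25849,0,0; -5421430000/668170801,-205100/25849,0] : M23) =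
    (!![1,0,0; 3287522/3231125,1,0; 505520060757/167042700250,6239007/6462250,1] : M33) := by
  rw [hP12, hP13]
  ext i j
  fin_cases i <;> fin_cases j <;>
    norm_num [Matrix.mul_apply, Fin.sum_univ_succ, Matrix.one_fin_three, Matrix.sub_apply]

set_option maxHeartbeats 1000000 in
lemma hLci :
    (!![1,0,0; 3287522/3231125,1,0; 505520060757/167042700250,6239007/6462250,1] : M33)⁻¹ =
    (!![1,0,0; -3287522/3231125,1,0;
        -42679134823971/20880337531250,-6239007/6462250,1] : M33) := by
  rw [Matrix.inv_eq_right_inv]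
  ext i j
  fin_cases i <;> fin_cases j <;>
    norm_num [Matrix.mul_apply, Fin.sum_univ_succ, Matrix.one_fin_three]

set_option maxHeartbeats 1000000 in
lemma hQ1c : (!![-14/25,0,0; -9/20,-43/100,0] : M23) *
    (!![1,0,0; -3287522/3231125,1,0;
        -42679134823971/20880337531250,-6239007/6462250,1] : M33) =
    (!![-14/25,0,0; -4037179/323112500,-43/100,0] : M23) := by
  ext i j
  fin_cases i <;> fin_cases j <;>
    norm_num [Matrix.mul_apply, Fin.sum_univ_succ]

set_option maxHeartbeats 1000000 in
lemma hQ2c : (!![-205100/25849,0,0; -5421430000/668170801,-205100/25849,0] : M23) *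
    (!![1,0,0; -3287522/3231125,1,0;
        -42679134823971/20880337531250,-6239007/6462250,1] : M33) =
    (!![-205100/25849,0,0; -136319512/3340854005,-205100/25849,0] : M23) := by
  ext i j
  fin_cases i <;> fin_cases j <;>
    norm_num [Matrix.mul_apply, Fin.sum_univ_succ]

set_option maxHeartbeats 1000000 in
lemma hcostFBhat :
    ceCostFB ceM1 (!![-14/25,0,0; -9/20,-43/100,0] : M23)
      (!![-205100/25849,0,0; -5421430000/668170801,-205100/25849,0] : M23) =
    113749899814553077674411620257/871976990837854689453125000 := by
  rw [ceCostFB, hLc, hLci, hQ1c, hQ2c, hM1, cost_eval]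
  norm_num

end FB


set_option maxHeartbeats 1000000 in
/-- In the nonzero-sum counterexample, the feedback strategies equivalent to the
unique feedforward Nash equilibrium are not a feedback Nash equilibrium: player 1
has a strictly improving structured deviation. -/
theorem nonzero_sum_no_transfer :
    ∃ Qb₁ Qb₂ : Matrix (Fin 2) (Fin 3) ℝ, ceNashFF Qb₁ Qb₂ ∧
      (∀ Q₁ Q₂, ceNashFF Q₁ Q₂ → Q₁ = Qb₁ ∧ Q₂ = Qb₂) ∧
      (∃ Kh₁ ∈ ceLT,
        ceCostFB ceM1 Kh₁ (ceG Qb₁ Qb₂).2 <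
          ceCostFB ceM1 (ceG Qb₁ Qb₂).1 (ceG Qb₁ Qb₂).2) ∧
      ¬ ceNashFB (ceG Qb₁ Qb₂).1 (ceG Qb₁ Qb₂).2 := by
  refine ⟨!![-11720/25849,0,0; -560/25849,-11720/25849,0],
          !![-205100/25849,0,0; -9800/25849,-205100/25849,0],
          ⟨mem_lt _ _ _, mem_lt _ _ _, nash1, nash2⟩, nash_unique, ?_, ?_⟩
  · refine ⟨!![-14/25,0,0; -9/20,-43/100,0], mem_lt _ _ _, ?_⟩
    simp only [hGpair]
    rw [hcostFBhat, hcostFBbar]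
    norm_num
  · simp only [hGpair]
    rintro ⟨-, -, h3, -⟩
    have h := h3 !![-14/25,0,0; -9/20,-43/100,0] (mem_lt _ _ _)
    rw [hcostFBhat, hcostFBbar] at h
    norm_num at h
end

section
/- If Z·A is strictly block lower triangular (nilpotent) and K is block lower triangular (causal), then (I - Z·A)⁻¹·Z·B·K has its diagonal blocks structure such that the set of causal (block lower triangular, with specified diagonal-block zeros) matrices is quadratically invariant under P₁₂ = (I - Z·A)⁻¹·Z·B: the product of a strictly-block-lower-triangular matrix with block lower triangular matrices remains in the causal structure, i.e., K·P₁₂·K' is block lower triangular with zero block diagonal whenever K, K' are block lower triangular. -/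
theorem causal_quadratic_invariance {n m N : ℕ}
    (Z : Matrix (Fin (N + 1) × Fin n) (Fin (N + 1) × Fin n) ℝ)
    (hZ : ∀ p q : Fin (N + 1) × Fin n,
        Z p q = if p.1.val = q.1.val + 1 ∧ p.2 = q.2 then 1 else 0)
    (A : Matrix (Fin (N + 1) × Fin n) (Fin (N + 1) × Fin n) ℝ)
    (hA : ∀ p q, p.1 ≠ q.1 → A p q = 0)
    (B : Matrix (Fin (N + 1) × Fin n) (Fin (N + 1) × Fin m) ℝ)
    (hB : ∀ p q, p.1 ≠ q.1 → B p q = 0)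
    (K K' : Matrix (Fin (N + 1) × Fin m) (Fin (N + 1) × Fin n) ℝ)
    (hK : ∀ p q, p.1.val < q.1.val → K p q = 0)
    (hK' : ∀ p q, p.1.val < q.1.val → K' p q = 0) :
    ∀ p q, p.1.val ≤ q.1.val → (K * ((1 - Z * A)⁻¹ * (Z * B)) * K') p q = 0 := by
  set L := Z * A with hLdef
  -- strict lower triangularity of L
  have hL : ∀ p q, p.1.val ≤ q.1.val → L p q = 0 := by
    intro p q hpq
    rw [hLdef, Matrix.mul_apply]
    apply Finset.sum_eq_zero
    intro r _
    by_cases h : p.1.val = r.1.val + 1 ∧ p.2 = r.2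
    · have hne : r.1 ≠ q.1 := Fin.ne_of_val_ne (by omega)
      rw [hA r q hne, mul_zero]
    · rw [hZ]; simp [h]
  -- powers of L
  have hLk : ∀ k, ∀ p q, p.1.val < q.1.val + k → (L ^ k) p q = 0 := by
    intro k
    induction k with
    | zero =>
      intro p q hpq
      simp only [pow_zero]
      have : p ≠ q := fun he => by simp [he] at hpq
      simp [Matrix.one_apply, this]
    | succ k ih =>
      intro p q hpq
      rw [pow_succ', Matrix.mul_apply]
      apply Finset.sum_eq_zero
      intro r _
      by_cases h : p.1.val ≤ r.1.val
      · rw [hL p r h, zero_mul]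
      · rw [ih r q (by omega), mul_zero]
  have hLnil : L ^ (N + 1) = 0 := by
    ext p q
    have := p.1.isLt
    simp [hLk (N + 1) p q (by omega)]
  -- geometric series inverse
  set S := ∑ k ∈ Finset.range (N + 1), L ^ k with hSdef
  have hgeom : (1 - L) * S = 1 := by
    have h1 : (L - 1) * S = L ^ (N + 1) - 1 := mul_geom_sum L (N + 1)
    have h2 : (1 - L) * S = -((L - 1) * S) := by noncomm_ring
    rw [h2, h1, hLnil]; simp
  have hinv : (1 - L)⁻¹ = S := Matrix.inv_eq_right_inv hgeom
  -- S is lower triangular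
  have hS : ∀ p q, p.1.val < q.1.val → S p q = 0 := by
    intro p q hpq
    rw [hSdef]
    simp only [Matrix.sum_apply]
    exact Finset.sum_eq_zero fun k _ => hLk k p q (by omega)
  -- Z * B is strictly lower triangular
  have hZB : ∀ p q, p.1.val ≤ q.1.val → (Z * B) p q = 0 := by
    intro p q hpq
    rw [Matrix.mul_apply]
    apply Finset.sum_eq_zero
    intro r _
    by_cases h : p.1.val = r.1.val + 1 ∧ p.2 = r.2
    · have hne : r.1 ≠ q.1 := Fin.ne_of_val_ne (by omega)
      rw [hB r q hne, mul_zero]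
    · rw [hZ]; simp [h]
  -- M := S * (Z * B) strictly lower triangular
  have hM : ∀ p q, p.1.val ≤ q.1.val → (S * (Z * B)) p q = 0 := by
    intro p q hpq
    rw [Matrix.mul_apply]
    apply Finset.sum_eq_zero
    intro r _
    by_cases h : p.1.val < r.1.val
    · rw [hS p r h, zero_mul]
    · rw [hZB r q (by omega), mul_zero]
  -- K * M strictly lower triangular
  have hKM : ∀ p q, p.1.val ≤ q.1.val → (K * (S * (Z * B))) p q = 0 := by
    intro p q hpq
    rw [Matrix.mul_apply]
    apply Finset.sum_eq_zero
    intro r _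
    by_cases h : p.1.val < r.1.val
    · rw [hK p r h, zero_mul]
    · rw [hM r q (by omega), mul_zero]
  -- final
  intro p q hpq
  rw [hinv, Matrix.mul_apply]
  apply Finset.sum_eq_zero
  intro r _
  by_cases h : r.1.val < q.1.val
  · rw [hK' r q h, mul_zero]
  · rw [hKM p r (by omega), zero_mul]
end
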